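/- Let Y₀, …, Y_{k-1} be independent geometric random variables where Y_t has success probability p_t ∈ (0,1], and let p* := min_t p_t, Y := Σ_t Y_t, μ := E[Y]. Then for any 0 < λ ≤ 1, Pr[Y ≤ λμ] ≤ exp(−p*·μ·(λ − 1 − ln λ)). -/

import Mathlib

/-!
Chernoff's bound at `t = -log (1 + x)`, where `x = p* (λ⁻¹ - 1)`. There the moment generating
function of a geometric variable with parameter `p` equals `(1 + x / p)⁻¹`, and Bernoulli's
inequality `(1 + y) ^ α ≤ 1 + α y` for `α = p* / p ≤ 1` bounds it by
`(1 + x / p*)^(-p*/p) = λ ^ (p* / p)`. By independence the product over the summands is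
`λ ^ (p* μ)`, since `μ = ∑ 1 / p_t`; finally `log (1 + x) ≤ x` bounds the remaining factor
`exp (λ μ log (1 + x))` by `exp (p* (1 - λ) μ)`.
-/

open MeasureTheory ProbabilityTheory Real

namespace ProbabilityTheory

section

variable {Ω 𝓧 E : Type*} {mΩ : MeasurableSpace Ω} {m𝓧 : MeasurableSpace 𝓧}
  [NormedAddCommGroup E] {X : Ω → 𝓧} {μ : Measure 𝓧} {P : Measure Ω}

lemma HasLaw.integrable_comp_iff (hX : HasLaw X μ P) {f : 𝓧 → E}
    (hf : AEStronglyMeasurable f μ) : Integrable (f ∘ X) P ↔ Integrable f μ := by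
  rw [← hX.map_eq, integrable_map_measure (hX.map_eq ▸ hf) hX.aemeasurable]

end

/-- The number of trials up to and including the first success; `geometricMeasure p` counts
only the failures. -/
noncomputable def shiftedGeometricMeasure (p : unitInterval) : Measure ℕ :=
  (geometricMeasure p).map (· + 1)

variable {p : unitInterval}

lemma integral_shiftedGeometricMeasure (hp : p ≠ 0) (f : ℕ → ℝ) :
    ∫ n, f n ∂shiftedGeometricMeasure p = ∑' n : ℕ, (1 - p) ^ n * p * f (n + 1) := by
  rw [shiftedGeometricMeasure, integral_map (by fun_prop) (by fun_prop),
    integral_geometricMeasure hp]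
  simp only [smul_eq_mul]

lemma integrable_shiftedGeometricMeasure_iff (hp : p ≠ 0) {f : ℕ → ℝ} :
    Integrable f (shiftedGeometricMeasure p) ↔
      Summable fun n : ℕ => (1 - p) ^ n * p * ‖f (n + 1)‖ := by
  rw [shiftedGeometricMeasure, integrable_map_measure (by fun_prop) (by fun_prop),
    integrable_geometricMeasure_iff hp]
  rfl

lemma hasSum_geometric_mul_succ (hp : p ≠ 0) :
    HasSum (fun n : ℕ => (1 - p) ^ n * p * ((n + 1 : ℕ) : ℝ)) (p : ℝ)⁻¹ := by
  have hp0 : (0 : ℝ) < p := unitInterval.pos_iff_ne_zero.2 hp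
  have hq : ‖(1 - p : ℝ)‖ < 1 := by
    rw [Real.norm_of_nonneg (by linarith [p.2.2])]; linarith
  convert! (hasSum_choose_mul_geometric_of_norm_lt_one 1 hq).mul_right (p : ℝ) using 1
  · funext n
    push_cast [Nat.choose_one_right]
    ring
  · field_simp
    ring

lemma hasSum_geometric_mul_exp_succ {t : ℝ} (ht : (1 - p) * exp t < 1) :
    HasSum (fun n : ℕ => (1 - p) ^ n * p * exp (t * ((n + 1 : ℕ) : ℝ)))
      (p * exp t / (1 - (1 - p) * exp t)) := by
  have hq : 0 ≤ (1 - p : ℝ) * exp t := mul_nonneg (by linarith [p.2.2]) (exp_pos t).le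
  convert! (hasSum_geometric_of_lt_one hq ht).mul_left ((p : ℝ) * exp t) using 1
  · funext n
    rw [Nat.cast_succ, mul_add, mul_one, exp_add, mul_comm t, exp_nat_mul, mul_pow]
    ring

variable {Ω : Type*} [MeasurableSpace Ω] {μ : Measure Ω} {X : Ω → ℕ}

lemma hasLaw_shiftedGeometricMeasure (hX : Measurable X) (hp : p ≠ 0)
    (h0 : μ {ω | X ω = 0} = 0)
    (hsucc : ∀ j : ℕ, 1 ≤ j → μ {ω | X ω = j} = ENNReal.ofReal ((1 - p) ^ (j - 1) * p)) :
    HasLaw X (shiftedGeometricMeasure p) μ := by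
  refine ⟨hX.aemeasurable, Measure.ext_of_singleton fun j => ?_⟩
  rw [Measure.map_apply hX (measurableSet_singleton j), shiftedGeometricMeasure,
    Measure.map_apply (by fun_prop) (measurableSet_singleton j)]
  rcases j with _ | n
  · simpa [Set.preimage] using h0
  · simpa [Set.preimage, geometricMeasure_singleton hp] using hsucc (n + 1) (by omega)

lemma HasLaw.integrable_natCast_of_shiftedGeometric
    (hX : HasLaw X (shiftedGeometricMeasure p) μ) (hp : p ≠ 0) :
    Integrable (fun ω => (X ω : ℝ)) μ := by
  refine (hX.integrable_comp_iff (f := fun n : ℕ => (n : ℝ)) (by fun_prop)).2 <|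
    (integrable_shiftedGeometricMeasure_iff hp).2 ?_
  simpa only [Real.norm_natCast] using (hasSum_geometric_mul_succ hp).summable

lemma HasLaw.integral_natCast_of_shiftedGeometric
    (hX : HasLaw X (shiftedGeometricMeasure p) μ) (hp : p ≠ 0) :
    ∫ ω, (X ω : ℝ) ∂μ = (p : ℝ)⁻¹ := by
  rw [← Function.comp_def (fun n : ℕ => (n : ℝ)) X, hX.integral_comp (by fun_prop),
    integral_shiftedGeometricMeasure hp, (hasSum_geometric_mul_succ hp).tsum_eq]

lemma HasLaw.mgf_of_shiftedGeometric (hX : HasLaw X (shiftedGeometricMeasure p) μ)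
    (hp : p ≠ 0) {t : ℝ} (ht : (1 - p) * exp t < 1) :
    mgf (fun ω => (X ω : ℝ)) μ t = p * exp t / (1 - (1 - p) * exp t) := by
  rw [mgf, ← Function.comp_def (fun n : ℕ => exp (t * n)) X, hX.integral_comp (by fun_prop),
    integral_shiftedGeometricMeasure hp, (hasSum_geometric_mul_exp_succ ht).tsum_eq]

lemma HasLaw.mgf_neg_log_one_add_of_shiftedGeometric
    (hX : HasLaw X (shiftedGeometricMeasure p) μ) (hp : p ≠ 0) {x : ℝ} (hx : 0 ≤ x) :
    mgf (fun ω => (X ω : ℝ)) μ (-log (1 + x)) = (1 + x / p)⁻¹ := by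
  have hp0 : (0 : ℝ) < p := unitInterval.pos_iff_ne_zero.2 hp
  have hexp : exp (-log (1 + x)) = (1 + x)⁻¹ := by
    rw [exp_neg, exp_log (by linarith)]
  have ht : (1 - p) * exp (-log (1 + x)) < 1 := by
    rw [hexp, ← div_eq_mul_inv, div_lt_one (by linarith)]
    linarith
  have hpx : (p : ℝ) + x ≠ 0 := by positivity
  rw [hX.mgf_of_shiftedGeometric hp ht, hexp]
  field_simp
  rw [show (1 : ℝ) + x - (1 - p) = p + x by ring, div_self hpx]

lemma inv_one_add_div_le_rpow {a b x : ℝ} (ha : 0 < a) (hab : a ≤ b) (hx : 0 ≤ x) :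
    (1 + x / b)⁻¹ ≤ (1 + x / a)⁻¹ ^ (a / b) := by
  have hb : 0 < b := ha.trans_le hab
  have bernoulli : (1 + x / a) ^ (a / b) ≤ 1 + x / b := by
    have := rpow_one_add_le_one_add_mul_self (s := x / a) (by have := div_nonneg hx ha.le; linarith)
      (div_nonneg ha.le hb.le) ((div_le_one hb).2 hab)
    rwa [show a / b * (x / a) = x / b by field_simp] at this
  rw [inv_rpow (by positivity)]
  exact inv_anti₀ (by positivity) bernoulli

theorem iIndepFun.measureReal_sum_le_le_exp_mul_prod_mgf {ι : Type*}
    {X : ι → Ω → ℝ} (h_indep : iIndepFun X μ) (h_meas : ∀ i, Measurable (X i))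
    (h_nonneg : ∀ i ω, 0 ≤ X i ω) (s : Finset ι) (ε : ℝ) {t : ℝ} (ht : t ≤ 0) :
    μ.real {ω | ∑ i ∈ s, X i ω ≤ ε} ≤ exp (-t * ε) * ∏ i ∈ s, mgf (X i) μ t := by
  have := h_indep.isProbabilityMeasure
  have h_int : Integrable (fun ω => exp (t * (∑ i ∈ s, X i) ω)) μ := by
    refine .of_bound (by fun_prop) 1 (ae_of_all _ fun ω => ?_)
    rw [norm_of_nonneg (exp_pos _).le, exp_le_one_iff, Finset.sum_apply]
    exact mul_nonpos_of_nonpos_of_nonneg ht (Finset.sum_nonneg fun i _ => h_nonneg i ω)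
  rw [← h_indep.mgf_sum h_meas s]
  simpa only [Finset.sum_apply] using measure_le_le_exp_mul_mgf ε ht h_int

theorem iIndepFun.measureReal_sum_le_le_of_shiftedGeometric {ι : Type*} [Fintype ι]
    {Y : ι → Ω → ℕ} {p : ι → unitInterval}
    (hY : ∀ i, Measurable (Y i)) (hindep : iIndepFun Y μ)
    (hlaw : ∀ i, HasLaw (Y i) (shiftedGeometricMeasure (p i)) μ)
    {q : ℝ} (hq : 0 < q) (hqp : ∀ i, q ≤ p i) {lam : ℝ} (hlam : 0 < lam)
    (hlam1 : lam ≤ 1) :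
    μ.real {ω | ∑ i, (Y i ω : ℝ) ≤ lam * ∑ i, (p i : ℝ)⁻¹} ≤
      exp (-(q * (∑ i, (p i : ℝ)⁻¹) * (lam - 1 - log lam))) := by
  have hp_ne i : p i ≠ 0 := fun h => (hq.trans_le (hqp i)).ne' (congrArg Subtype.val h)
  set m := ∑ i, (p i : ℝ)⁻¹
  have hm : 0 ≤ m := Finset.sum_nonneg fun i _ => inv_nonneg.2 (p i).2.1
  set x := q * (lam⁻¹ - 1) with hx_def
  have hx : 0 ≤ x := mul_nonneg hq.le (sub_nonneg.2 ((one_le_inv₀ hlam).2 hlam1))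
  have hlam_eq : (1 + x / q)⁻¹ = lam := by
    rw [hx_def, mul_div_cancel_left₀ _ hq.ne', add_sub_cancel, inv_inv]
  have hmgf i : mgf (fun ω => (Y i ω : ℝ)) μ (-log (1 + x)) ≤ lam ^ (q / p i) := by
    rw [(hlaw i).mgf_neg_log_one_add_of_shiftedGeometric (hp_ne i) hx, ← hlam_eq]
    exact inv_one_add_div_le_rpow hq (hqp i) hx
  have hlog : log (1 + x) ≤ x := by linarith [log_le_sub_one_of_pos (by linarith : 0 < 1 + x)]
  refine ((hindep.comp (fun _ (n : ℕ) => (n : ℝ)) fun _ => measurable_from_nat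
    ).measureReal_sum_le_le_exp_mul_prod_mgf (fun i => measurable_from_nat.comp (hY i))
      (fun _ _ => Nat.cast_nonneg _) Finset.univ (lam * m) (t := -log (1 + x))
      (neg_nonpos.2 (log_nonneg (by linarith)))).trans ?_
  calc _ ≤ exp (x * (lam * m)) * ∏ i, lam ^ (q / p i) := by
        refine mul_le_mul ?_ (Finset.prod_le_prod (fun _ _ => mgf_nonneg) fun i _ => hmgf i)
          (Finset.prod_nonneg fun _ _ => mgf_nonneg) (exp_pos _).le
        rw [neg_neg, exp_le_exp]
        exact mul_le_mul_of_nonneg_right hlog (mul_nonneg hlam.le hm)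
    _ = exp (-(q * m * (lam - 1 - log lam))) := by
        rw [← rpow_sum_of_pos hlam, rpow_def_of_pos hlam, ← exp_add]
        congr 1
        simp only [m, div_eq_mul_inv, ← Finset.mul_sum, hx_def]
        field_simp
        ring

end ProbabilityTheory

theorem janson_geometric_lower_tail_general {Ω : Type*} [MeasurableSpace Ω]
    (μ : Measure Ω) [IsProbabilityMeasure μ]
    (k : ℕ)
    (Y : Fin k → Ω → ℕ) (hY : ∀ t, Measurable (Y t))
    (hindep : iIndepFun Y μ)
    (p : Fin k → ℝ) (hp : ∀ t, p t ∈ Set.Ioc (0 : ℝ) 1)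
    (hgeom : ∀ t, ∀ j : ℕ, 1 ≤ j →
      μ {ω | Y t ω = j} = ENNReal.ofReal ((1 - p t) ^ (j - 1) * p t))
    (hgeom0 : ∀ t, μ {ω | Y t ω = 0} = 0)
    (pstar : ℝ) (hpstar : IsLeast {x | ∃ t, p t = x} pstar)
    (μE : ℝ) (hμE : μE = ∫ ω, (∑ t, (Y t ω : ℝ)) ∂μ)
    (lam : ℝ) (hlam : 0 < lam) (hlam1 : lam ≤ 1) :
    μ {ω | (∑ t, (Y t ω : ℝ)) ≤ lam * μE} ≤
      ENNReal.ofReal (Real.exp (-(pstar * μE * (lam - 1 - Real.log lam)))) := by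
  obtain ⟨⟨t₀, rfl⟩, hmin⟩ := hpstar
  let P t : unitInterval := ⟨p t, Set.Ioc_subset_Icc_self (hp t)⟩
  have hP t : P t ≠ 0 := fun h => (hp t).1.ne' (congrArg Subtype.val h)
  have hlaw t := hasLaw_shiftedGeometricMeasure (hY t) (hP t) (hgeom0 t) (hgeom t)
  have hmean : μE = ∑ t, (p t)⁻¹ := by
    rw [hμE, integral_finsetSum _ fun t _ =>
      (hlaw t).integrable_natCast_of_shiftedGeometric (hP t)]
    exact Finset.sum_congr rfl fun t _ => (hlaw t).integral_natCast_of_shiftedGeometric (hP t)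
  rw [hmean, ← ENNReal.ofReal_toReal (measure_ne_top μ _)]
  exact ENNReal.ofReal_le_ofReal <| hindep.measureReal_sum_le_le_of_shiftedGeometric hY hlaw
    (hp t₀).1 (fun t => hmin ⟨t, rfl⟩) hlam hlam1

/-- Janson's lower-tail bound for sums of independent geometric random variables:
if `Y₀, …, Y_{k-1}` are independent, `Y_t` geometric with parameter `p_t ∈ (0,1]`
(values in `{1,2,…}` with `Pr[Y_t = j] = (1-p_t)^{j-1}·p_t`), `p* = min_t p_t`,
`Y = Σ_t Y_t` and `μ* = E[Y]`, then for `0 < λ ≤ 1`,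
`Pr[Y ≤ λ·μ*] ≤ exp(−p*·μ*·(λ − 1 − ln λ))`. -/
theorem janson_geometric_lower_tail {Ω : Type*} [MeasurableSpace Ω]
    (μ : Measure Ω) [IsProbabilityMeasure μ]
    (k : ℕ) (hk : 0 < k)
    (Y : Fin k → Ω → ℕ) (hY : ∀ t, Measurable (Y t))
    (hindep : iIndepFun Y μ)
    (p : Fin k → ℝ) (hp : ∀ t, p t ∈ Set.Ioc (0 : ℝ) 1)
    (hgeom : ∀ t, ∀ j : ℕ, 1 ≤ j →
      μ {ω | Y t ω = j} = ENNReal.ofReal ((1 - p t) ^ (j - 1) * p t))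
    (hgeom0 : ∀ t, μ {ω | Y t ω = 0} = 0)
    (pstar : ℝ) (hpstar : IsLeast {x | ∃ t, p t = x} pstar)
    (μE : ℝ) (hμE : μE = ∫ ω, (∑ t, (Y t ω : ℝ)) ∂μ)
    (lam : ℝ) (hlam : 0 < lam) (hlam1 : lam ≤ 1) :
    μ {ω | (∑ t, (Y t ω : ℝ)) ≤ lam * μE} ≤
      ENNReal.ofReal (Real.exp (-(pstar * μE * (lam - 1 - Real.log lam)))) :=
  janson_geometric_lower_tail_general μ k Y hY hindep p hp hgeom hgeom0 pstar hpstar μE hμE lam hlam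
    hlam1
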